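/- Every projective A-set P is isomorphic to a wedge ⋁_{i∈I} e_i A where each e_i ∈ A is an idempotent (e_i² = e_i). -/

import Mathlib

universe u

/-- An `A`-set over a commutative monoid with zero `A`: a pointed set with an `A`-action
such that `(ab).m = a.(b.m)`, `a.∗ = ∗`, `0.m = ∗` and `1.m = m`. -/
structure ASet (A : Type u) [CommMonoidWithZero A] : Type (u + 1) where
  carrier : Type u
  pt : carrier
  act : A → carrier → carrier
  act_mul : ∀ a b m, act (a * b) m = act a (act b m)
  act_pt : ∀ a, act a pt = pt
  zero_act : ∀ m, act 0 m = pt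
  one_act : ∀ m, act 1 m = m

variable {A : Type u} [CommMonoidWithZero A]

/-- A morphism of `A`-sets: a basepoint-preserving `A`-equivariant map. -/
structure ASetHom (M N : ASet A) where
  toFun : M.carrier → N.carrier
  map_pt : toFun M.pt = N.pt
  map_act : ∀ a m, toFun (M.act a m) = N.act a (toFun m)

namespace ASetHom

theorem ext {M N : ASet A} {f g : ASetHom M N} (h : ∀ m, f.toFun m = g.toFun m) :
    f = g := by
  cases f; cases g
  simp only [mk.injEq]
  exact funext h

/-- The identity morphism of `A`-sets. -/
def id (M : ASet A) : ASetHom M M := ⟨fun m => m, rfl, fun _ _ => rfl⟩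

/-- Composition of morphisms of `A`-sets. -/
def comp {M N P : ASet A} (g : ASetHom N P) (f : ASetHom M N) : ASetHom M P :=
  ⟨fun m => g.toFun (f.toFun m), by rw [f.map_pt, g.map_pt],
    fun a m => by rw [f.map_act, g.map_act]⟩

/-- Monomorphism in the category of `A`-sets. -/
def IsMono {M N : ASet A} (f : ASetHom M N) : Prop :=
  ∀ (P : ASet A) (g h : ASetHom P M), f.comp g = f.comp h → g = h

/-- Epimorphism in the category of `A`-sets. -/
def IsEpi {M N : ASet A} (f : ASetHom M N) : Prop :=
  ∀ (P : ASet A) (g h : ASetHom N P), g.comp f = h.comp f → g = h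

/-- Isomorphism in the category of `A`-sets. -/
def IsIso {M N : ASet A} (f : ASetHom M N) : Prop :=
  ∃ g : ASetHom N M, g.comp f = id M ∧ f.comp g = id N

/-- A morphism of `A`-sets is normal if each fibre over a non-basepoint element
contains at most one element. -/
def IsNormal {M N : ASet A} (f : ASetHom M N) : Prop :=
  ∀ m m', f.toFun m = f.toFun m' → f.toFun m ≠ N.pt → m = m'

/-- The kernel of a morphism of `A`-sets: the preimage of the basepoint. -/
def kerSet {M N : ASet A} (f : ASetHom M N) : Set M.carrier :=
  {m | f.toFun m = N.pt}

end ASetHom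

namespace ASet

/-- The sub-`A`-set determined by a subset stable under the action and containing the
basepoint. -/
def sub (M : ASet A) (S : Set M.carrier) (hpt : M.pt ∈ S)
    (hact : ∀ a : A, ∀ m ∈ S, M.act a m ∈ S) : ASet A where
  carrier := ↥S
  pt := ⟨M.pt, hpt⟩
  act a m := ⟨M.act a m.1, hact a m.1 m.2⟩
  act_mul a b m := Subtype.ext (M.act_mul a b m.1)
  act_pt a := Subtype.ext (M.act_pt a)
  zero_act m := Subtype.ext (M.zero_act m.1)
  one_act m := Subtype.ext (M.one_act m.1)

/-- The relation collapsing the subset `S` to a point. -/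
def quotRel (M : ASet A) (S : Set M.carrier) : M.carrier → M.carrier → Prop :=
  fun m m' => m = m' ∨ (m ∈ S ∧ m' ∈ S)

/-- The quotient `A`-set `M/S` collapsing an action-stable subset `S` to the basepoint. -/
def quot (M : ASet A) (S : Set M.carrier)
    (hact : ∀ a : A, ∀ m ∈ S, M.act a m ∈ S) : ASet A where
  carrier := Quot (M.quotRel S)
  pt := Quot.mk _ M.pt
  act a := Quot.lift (fun m => Quot.mk _ (M.act a m)) (by
    rintro m m' (rfl | ⟨h1, h2⟩)
    · rfl
    · exact Quot.sound (Or.inr ⟨hact a m h1, hact a m' h2⟩))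
  act_mul a b q := Quot.inductionOn q fun m => by
    show Quot.mk _ (M.act (a * b) m) = Quot.mk _ (M.act a (M.act b m))
    rw [M.act_mul]
  act_pt a := by
    show Quot.mk _ (M.act a M.pt) = Quot.mk _ M.pt
    rw [M.act_pt]
  zero_act q := Quot.inductionOn q fun m => by
    show Quot.mk _ (M.act 0 m) = Quot.mk _ M.pt
    rw [M.zero_act]
  one_act q := Quot.inductionOn q fun m => by
    show Quot.mk _ (M.act 1 m) = Quot.mk _ m
    rw [M.one_act]

end ASet

namespace ASetHom

theorem kerSet_stable {M N : ASet A} (f : ASetHom M N) :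
    ∀ a : A, ∀ m ∈ f.kerSet, M.act a m ∈ f.kerSet := by
  intro a m hm
  show f.toFun (M.act a m) = N.pt
  rw [f.map_act, hm, N.act_pt]

/-- The image of a morphism of `A`-sets, as an `A`-set. -/
def imageASet {M N : ASet A} (f : ASetHom M N) : ASet A :=
  N.sub (Set.range f.toFun) ⟨M.pt, f.map_pt⟩
    (fun a n hn => by
      obtain ⟨m, rfl⟩ := hn
      exact ⟨M.act a m, f.map_act a m⟩)

/-- The coimage `M/ker f` of a morphism of `A`-sets. -/
def coimage {M N : ASet A} (f : ASetHom M N) : ASet A :=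
  M.quot f.kerSet f.kerSet_stable

/-- The canonical morphism `M/ker f → im f`. -/
def canonical {M N : ASet A} (f : ASetHom M N) : ASetHom f.coimage f.imageASet where
  toFun := Quot.lift (fun m => (⟨f.toFun m, ⟨m, rfl⟩⟩ : ↥(Set.range f.toFun))) (by
    rintro m m' (rfl | ⟨h1, h2⟩)
    · rfl
    · exact Subtype.ext (h1.trans h2.symm))
  map_pt := Subtype.ext f.map_pt
  map_act a q := Quot.inductionOn q fun m => Subtype.ext (f.map_act a m)

end ASetHom

namespace ASet

attribute [local instance] Classical.propDecidable

/-- `A` as an `A`-set over itself (basepoint `0`). -/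
def ofSelf (A : Type u) [CommMonoidWithZero A] : ASet A :=
  ⟨A, 0, (· * ·), mul_assoc, mul_zero, zero_mul, one_mul⟩

/-- The `A`-set `eA` for an element `e` of `A`. -/
def idem (A : Type u) [CommMonoidWithZero A] (e : A) : ASet A :=
  (ofSelf A).sub {x | ∃ a : A, x = e * a} ⟨0, (mul_zero e).symm⟩
    (fun a m hm => by
      obtain ⟨b, rfl⟩ := hm
      exact ⟨a * b, mul_left_comm a e b⟩)

/-- Underlying carrier of the wedge of a family of `A`-sets. -/
def WedgeCarrier {ι : Type u} (Ms : ι → ASet A) : Type u :=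
  Option ((i : ι) × {m : (Ms i).carrier // m ≠ (Ms i).pt})

/-- Action on the wedge carrier. -/
noncomputable def wedgeAct {ι : Type u} (Ms : ι → ASet A) (a : A)
    (x : WedgeCarrier Ms) : WedgeCarrier Ms :=
  x.bind fun p =>
    if h : (Ms p.1).act a p.2.1 = (Ms p.1).pt then none else some ⟨p.1, ⟨_, h⟩⟩

theorem wedgeAct_mul {ι : Type u} (Ms : ι → ASet A) (a b : A) (x : WedgeCarrier Ms) :
    wedgeAct Ms (a * b) x = wedgeAct Ms a (wedgeAct Ms b x) := by
  cases x with
  | none => rfl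
  | some p =>
    obtain ⟨i, m, hm⟩ := p
    simp only [wedgeAct, Option.bind]
    by_cases h1 : (Ms i).act b m = (Ms i).pt
    · rw [dif_pos h1, dif_pos (by rw [(Ms i).act_mul, h1, (Ms i).act_pt])]
    · rw [dif_neg h1]
      simp only [Option.bind]
      by_cases h2 : (Ms i).act a ((Ms i).act b m) = (Ms i).pt
      · rw [dif_pos (by rw [(Ms i).act_mul]; exact h2), dif_pos h2]
      · rw [dif_neg (by rw [(Ms i).act_mul]; exact h2), dif_neg h2]
        simp only [(Ms i).act_mul]
        rfl

/-- The wedge (coproduct) of a family of `A`-sets. -/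
noncomputable def wedge {ι : Type u} (Ms : ι → ASet A) : ASet A where
  carrier := WedgeCarrier Ms
  pt := none
  act := wedgeAct Ms
  act_mul := wedgeAct_mul Ms
  act_pt _ := rfl
  zero_act x := by
    cases x with
    | none => rfl
    | some p =>
      simp only [wedgeAct, Option.bind]
      rw [dif_pos ((Ms p.1).zero_act p.2.1)]
  one_act x := by
    cases x with
    | none => rfl
    | some p =>
      obtain ⟨i, m, hm⟩ := p
      simp only [wedgeAct, Option.bind]
      rw [dif_neg (by rw [(Ms i).one_act]; exact hm)]
      simp only [(Ms i).one_act]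
      rfl

/-- `A`-sets `M` and `N` are isomorphic. -/
def Iso (M N : ASet A) : Prop := ∃ f : ASetHom M N, f.IsIso

/-- The free `A`-set on a (index) type `S`, i.e. `⋁_{s ∈ S} A·s`. -/
noncomputable def free (A : Type u) [CommMonoidWithZero A] (S : Type u) : ASet A :=
  wedge (fun _ : S => ofSelf A)

/-- A projective `A`-set: morphisms out of it lift along every epimorphism. -/
def IsProjective (P : ASet A) : Prop :=
  ∀ (M N : ASet A) (e : ASetHom M N), e.IsEpi →
    ∀ f : ASetHom P N, ∃ g : ASetHom P M, e.comp g = f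

end ASet

namespace ASet

attribute [local instance] Classical.propDecidable

/-- The binary wedge `M ∨ N` of two `A`-sets. -/
noncomputable def wedge2 (M N : ASet A) : ASet A where
  carrier := Option ({m : M.carrier // m ≠ M.pt} ⊕ {n : N.carrier // n ≠ N.pt})
  pt := none
  act a x := x.bind (Sum.elim
    (fun m => if h : M.act a m.1 = M.pt then none else some (.inl ⟨_, h⟩))
    (fun n => if h : N.act a n.1 = N.pt then none else some (.inr ⟨_, h⟩)))
  act_mul a b x := by
    cases x with
    | none => rfl
    | some p =>
      cases p with
      | inl m =>
        simp only [Option.bind, Sum.elim_inl]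
        by_cases h1 : M.act b m.1 = M.pt
        · rw [dif_pos h1, dif_pos (by rw [M.act_mul, h1, M.act_pt])]
        · rw [dif_neg h1]
          simp only [Option.bind, Sum.elim_inl]
          by_cases h2 : M.act a (M.act b m.1) = M.pt
          · rw [dif_pos (by rw [M.act_mul]; exact h2), dif_pos h2]
          · rw [dif_neg (by rw [M.act_mul]; exact h2), dif_neg h2]
            simp only [M.act_mul]
      | inr n =>
        simp only [Option.bind, Sum.elim_inr]
        by_cases h1 : N.act b n.1 = N.pt
        · rw [dif_pos h1, dif_pos (by rw [N.act_mul, h1, N.act_pt])]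
        · rw [dif_neg h1]
          simp only [Option.bind, Sum.elim_inr]
          by_cases h2 : N.act a (N.act b n.1) = N.pt
          · rw [dif_pos (by rw [N.act_mul]; exact h2), dif_pos h2]
          · rw [dif_neg (by rw [N.act_mul]; exact h2), dif_neg h2]
            simp only [N.act_mul]
  act_pt _ := rfl
  zero_act x := by
    cases x with
    | none => rfl
    | some p =>
      cases p with
      | inl m => simp only [Option.bind, Sum.elim_inl]; rw [dif_pos (M.zero_act m.1)]
      | inr n => simp only [Option.bind, Sum.elim_inr]; rw [dif_pos (N.zero_act n.1)]
  one_act x := by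
    cases x with
    | none => rfl
    | some p =>
      cases p with
      | inl m =>
        simp only [Option.bind, Sum.elim_inl]
        rw [dif_neg (by rw [M.one_act]; exact m.2)]
        simp only [M.one_act]
      | inr n =>
        simp only [Option.bind, Sum.elim_inr]
        rw [dif_neg (by rw [N.one_act]; exact n.2)]
        simp only [N.one_act]

/-- The canonical inclusion `M → M ∨ N`. -/
noncomputable def wedge2.inl (M N : ASet A) : ASetHom M (wedge2 M N) where
  toFun m := if h : m = M.pt then none else some (.inl ⟨m, h⟩)
  map_pt := dif_pos rfl
  map_act a m := by
    show (if h : M.act a m = M.pt then none else some (.inl ⟨M.act a m, h⟩) :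
        Option ({m : M.carrier // m ≠ M.pt} ⊕ {n : N.carrier // n ≠ N.pt})) =
      (wedge2 M N).act a ((if h : m = M.pt then none else some (.inl ⟨m, h⟩) :
        Option ({m : M.carrier // m ≠ M.pt} ⊕ {n : N.carrier // n ≠ N.pt})))
    by_cases h : m = M.pt
    · subst h
      rw [dif_pos (M.act_pt a), dif_pos rfl]
      rfl
    · rw [dif_neg h]
      dsimp only [wedge2, Option.bind, Sum.elim_inl]

/-- The canonical projection `M ∨ N → N`. -/
noncomputable def wedge2.snd (M N : ASet A) : ASetHom (wedge2 M N) N where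
  toFun x := x.elim N.pt (Sum.elim (fun _ => N.pt) (fun n => n.1))
  map_pt := rfl
  map_act a x := by
    cases x with
    | none => exact (N.act_pt a).symm
    | some p =>
      cases p with
      | inl m =>
        dsimp only [wedge2, Option.bind, Sum.elim_inl]
        by_cases h : M.act a m.1 = M.pt
        · rw [dif_pos h]
          exact (N.act_pt a).symm
        · rw [dif_neg h]
          exact (N.act_pt a).symm
      | inr n =>
        dsimp only [wedge2, Option.bind, Sum.elim_inr]
        by_cases h : N.act a n.1 = N.pt
        · rw [dif_pos h]
          exact h.symm
        · rw [dif_neg h]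
          rfl

end ASet

namespace ASet

/-- The localization relation on `S × M`: `(s,m) ∼ (s',m')` iff `ts.m' = ts'.m` for
some `t ∈ S`. -/
def locRel (S : Submonoid A) (M : ASet A) :
    (S × M.carrier) → (S × M.carrier) → Prop :=
  fun p q => ∃ t : S, M.act (↑t * ↑p.1) q.2 = M.act (↑t * ↑q.1) p.2

/-- The localization `S⁻¹M` of an `A`-set at a multiplicative subset `S`, with the
`A`-action `a.(m/s) = (a.m)/s`. -/
def loc (S : Submonoid A) (M : ASet A) : ASet A where
  carrier := Quot (locRel S M)
  pt := Quot.mk _ (1, M.pt)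
  act a := Quot.lift (fun p => Quot.mk _ (p.1, M.act a p.2)) (by
    rintro ⟨s, m⟩ ⟨s', m'⟩ ⟨t, ht⟩
    dsimp only at ht
    refine Quot.sound ⟨t, ?_⟩
    dsimp only
    rw [← M.act_mul, mul_comm _ a, M.act_mul, ht, ← M.act_mul, mul_comm a, M.act_mul])
  act_mul a b q := Quot.inductionOn q fun p => by
    show Quot.mk _ (p.1, M.act (a * b) p.2) = Quot.mk _ (p.1, M.act a (M.act b p.2))
    rw [M.act_mul]
  act_pt a := by
    show Quot.mk _ ((1 : S), M.act a M.pt) = Quot.mk _ ((1 : S), M.pt)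
    rw [M.act_pt]
  zero_act q := Quot.inductionOn q fun p => by
    show Quot.mk _ (p.1, M.act 0 p.2) = Quot.mk _ ((1 : S), M.pt)
    rw [M.zero_act]
    exact Quot.sound ⟨1, by simp only [M.act_pt]⟩
  one_act q := Quot.inductionOn q fun p => by
    show Quot.mk _ (p.1, M.act 1 p.2) = Quot.mk _ p
    rw [M.one_act]

end ASet

namespace ASetHom

/-- The localization `S⁻¹f` of a morphism of `A`-sets. -/
def locMap (S : Submonoid A) {M N : ASet A} (f : ASetHom M N) :
    ASetHom (ASet.loc S M) (ASet.loc S N) where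
  toFun := Quot.lift (fun p => Quot.mk _ (p.1, f.toFun p.2)) (by
    rintro ⟨s, m⟩ ⟨s', m'⟩ ⟨t, ht⟩
    dsimp only at ht
    refine Quot.sound ⟨t, ?_⟩
    dsimp only
    rw [← f.map_act, ← f.map_act, ht])
  map_pt := by
    show Quot.mk _ ((1 : S), f.toFun M.pt) = Quot.mk _ ((1 : S), N.pt)
    rw [f.map_pt]
  map_act a q := Quot.inductionOn q fun p => by
    show Quot.mk _ (p.1, f.toFun (M.act a p.2)) = Quot.mk _ (p.1, N.act a (f.toFun p.2))
    rw [f.map_act]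

end ASetHom

namespace ASet

/-- The generating relation for the tensor product of two `A`-sets:
`(a.m, n) ∼ (m, a.n)`. -/
def tensorRel (M N : ASet A) :
    (M.carrier × N.carrier) → (M.carrier × N.carrier) → Prop :=
  fun p q => ∃ (a : A) (m : M.carrier) (n : N.carrier),
    p = (M.act a m, n) ∧ q = (m, N.act a n)

/-- The tensor product `M ⊗_A N` of two `A`-sets. -/
def tensor (M N : ASet A) : ASet A where
  carrier := Quot (tensorRel M N)
  pt := Quot.mk _ (M.pt, N.pt)
  act a := Quot.lift (fun p => Quot.mk _ (M.act a p.1, p.2)) (by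
    rintro p q ⟨b, m, n, rfl, rfl⟩
    dsimp only
    rw [← M.act_mul, mul_comm a b, M.act_mul]
    exact Quot.sound ⟨b, M.act a m, n, rfl, rfl⟩)
  act_mul a b q := Quot.inductionOn q fun p => by
    show Quot.mk _ (M.act (a * b) p.1, p.2) = Quot.mk _ (M.act a (M.act b p.1), p.2)
    rw [M.act_mul]
  act_pt a := by
    show Quot.mk _ (M.act a M.pt, N.pt) = Quot.mk _ (M.pt, N.pt)
    rw [M.act_pt]
  zero_act q := Quot.inductionOn q fun p => by
    show Quot.mk _ (M.act 0 p.1, p.2) = Quot.mk _ (M.pt, N.pt)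
    rw [M.zero_act]
    exact Quot.sound ⟨0, M.pt, p.2, by rw [M.zero_act], by rw [N.zero_act]⟩
  one_act q := Quot.inductionOn q fun p => by
    show Quot.mk _ (M.act 1 p.1, p.2) = Quot.mk _ p
    rw [M.one_act]

/-- The product of a family of `A`-sets. -/
def pi {ι : Type u} (Ms : ι → ASet A) : ASet A where
  carrier := ∀ i, (Ms i).carrier
  pt := fun i => (Ms i).pt
  act a m := fun i => (Ms i).act a (m i)
  act_mul a b m := funext fun i => (Ms i).act_mul a b (m i)
  act_pt a := funext fun i => (Ms i).act_pt a
  zero_act m := funext fun i => (Ms i).zero_act (m i)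
  one_act m := funext fun i => (Ms i).one_act (m i)

/-- The linearization `M_ℤ` of an `A`-set: the free abelian group on `M ∖ {∗}`. -/
abbrev lin (M : ASet A) : Type u := {m : M.carrier // m ≠ M.pt} →₀ ℤ

end ASet

namespace ASetHom

attribute [local instance] Classical.propDecidable

/-- The linearization `f_ℤ : M_ℤ → N_ℤ` of a morphism of `A`-sets. -/
noncomputable def lin {M N : ASet A} (f : ASetHom M N) : M.lin →+ N.lin :=
  Finsupp.liftAddHom fun m =>
    if h : f.toFun m.1 = N.pt then 0 else Finsupp.singleAddHom ⟨f.toFun m.1, h⟩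

end ASetHom

namespace ASet

/-- The action of `a ∈ A` on `M`, as a morphism of `A`-sets. -/
def actHom (M : ASet A) (a : A) : ASetHom M M :=
  ⟨M.act a, M.act_pt a, fun b m => by
    rw [← M.act_mul, mul_comm a b, M.act_mul]⟩

/-- The linearization of the action of `a ∈ A` on `M_ℤ`. -/
noncomputable def actLin (M : ASet A) (a : A) : M.lin →+ M.lin := (M.actHom a).lin

/-- An `A`-set is finitely generated if it is a finite union of orbits `A.mᵢ`. -/
def FG (M : ASet A) : Prop :=
  ∃ s : Finset M.carrier, ∀ m : M.carrier, ∃ g ∈ s, ∃ a : A, m = M.act a g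

/-- A subset of an `A`-set is an `A`-subset if it contains the basepoint and is stable
under the action. -/
def IsSubASet (M : ASet A) (N : Set M.carrier) : Prop :=
  M.pt ∈ N ∧ ∀ a : A, ∀ m ∈ N, M.act a m ∈ N

/-- An `A`-subset is finitely generated. -/
def SubFG (M : ASet A) (N : Set M.carrier) : Prop :=
  ∃ s : Finset M.carrier, ↑s ⊆ N ∧ ∀ m ∈ N, ∃ g ∈ s, ∃ a : A, m = M.act a g

/-- An `A`-set is Noetherian if every `A`-subset is finitely generated. -/
def Noetherian (M : ASet A) : Prop :=
  ∀ N : Set M.carrier, M.IsSubASet N → M.SubFG N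

/-- `M_ℤ` is a finitely generated `A_ℤ`-module: there are finitely many elements whose
`A`-translates generate `M_ℤ` as an abelian group. -/
def linFG (M : ASet A) : Prop :=
  ∃ s : Finset M.lin,
    AddSubgroup.closure {y : M.lin | ∃ g ∈ s, ∃ a : A, y = M.actLin a g} = ⊤

end ASet

namespace ASetHom

/-- The kernel of a morphism of `A`-sets, as an `A`-set. -/
def kerASet {M N : ASet A} (f : ASetHom M N) : ASet A :=
  M.sub f.kerSet f.map_pt f.kerSet_stable

/-- The canonical inclusion `(ker f)_ℤ → M_ℤ`. -/
noncomputable def kerLinIncl {M N : ASet A} (f : ASetHom M N) :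
    (f.kerASet).lin →+ M.lin :=
  Finsupp.mapDomain.addMonoidHom fun x =>
    (⟨x.1.1, fun h => x.2 (Subtype.ext h)⟩ : {m : M.carrier // m ≠ M.pt})

/-- `f` is a kernel of `g` (via the concrete description of kernels of `A`-sets). -/
def IsKernelOf {M N P : ASet A} (f : ASetHom M N) (g : ASetHom N P) : Prop :=
  Function.Injective f.toFun ∧ Set.range f.toFun = g.kerSet

/-- `f` is a cokernel of `g` (via the concrete description `N ≅ M/im g`). -/
def IsCokernelOf {M N P : ASet A} (f : ASetHom M N) (g : ASetHom P M) : Prop :=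
  Function.Surjective f.toFun ∧
    ∀ m m', f.toFun m = f.toFun m' ↔
      (m = m' ∨ (m ∈ Set.range g.toFun ∧ m' ∈ Set.range g.toFun))

end ASetHom

/-!
Let `π : ⋁_{p ≠ ∗} A·p → P` be the canonical epimorphism and `σ` a section of it, which exists
by projectivity. Writing `σ p = (base p, coef p)` gives `p = coef p • base p` with `coef`
equivariant and `base` constant along orbits away from `∗`. The points `g ≠ ∗` fixed by `base`
are generators with `e_g • g = g` for `e_g = coef g`; applying `coef` to this gives `e_g = e_g²`,
and `p ↦ (base p, coef p)` identifies `P` with `⋁_g e_g A`.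
-/

namespace ASetHom

theorem isEpi_of_surjective {M N : ASet A} (f : ASetHom M N) (hf : Function.Surjective f.toFun) :
    f.IsEpi := by
  intro P g h hgh
  refine ASetHom.ext fun n => ?_
  obtain ⟨m, rfl⟩ := hf n
  exact congrArg (fun k : ASetHom M P => k.toFun m) hgh

end ASetHom

namespace ASet

theorem Iso.of_inverse {M N : ASet A} (g : ASetHom N M) (f : M.carrier → N.carrier)
    (hgf : Function.LeftInverse g.toFun f) (hfg : Function.RightInverse g.toFun f) :
    Iso M N := by
  refine ⟨⟨f, by rw [← g.map_pt, hfg], fun a m => ?_⟩, g, ASetHom.ext hgf, ASetHom.ext hfg⟩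
  conv_lhs => rw [← hgf m]
  rw [← g.map_act, hfg]

theorem IsProjective.exists_section {P M : ASet A} (hP : P.IsProjective) (π : ASetHom M P)
    (hπ : Function.Surjective π.toFun) : ∃ σ : ASetHom P M, π.comp σ = ASetHom.id P :=
  hP M P π (π.isEpi_of_surjective hπ) (ASetHom.id P)

def orbitHom (M : ASet A) (m : M.carrier) : ASetHom (ofSelf A) M :=
  ⟨fun a => M.act a m, M.zero_act m, fun a b => M.act_mul a b m⟩

def idemVal (e : A) : ASetHom (idem A e) (ofSelf A) :=
  ⟨Subtype.val, rfl, fun _ _ => rfl⟩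

open Classical in
theorem wedge_act_some {ι : Type u} (Ms : ι → ASet A) (b : A)
    (x : (i : ι) × {m : (Ms i).carrier // m ≠ (Ms i).pt}) :
    (wedge Ms).act b (some x) =
      if h : (Ms x.1).act b x.2.1 = (Ms x.1).pt then none
      else some ⟨x.1, ⟨(Ms x.1).act b x.2.1, h⟩⟩ := rfl

noncomputable def wedgeLift {ι : Type u} {Ms : ι → ASet A} {N : ASet A}
    (f : ∀ i, ASetHom (Ms i) N) : ASetHom (wedge Ms) N where
  toFun x := Option.elim x N.pt fun y => (f y.1).toFun y.2.1
  map_pt := rfl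
  map_act b x := by
    rcases x with _ | y
    · exact (N.act_pt b).symm
    · rw [wedge_act_some]
      split_ifs with h
      · show N.pt = N.act b ((f y.1).toFun y.2.1)
        rw [← (f y.1).map_act, h, (f y.1).map_pt]
      · exact (f y.1).map_act b y.2.1

theorem wedge_idem_some_eq {ι : Type u} {e : ι → A} {i j : ι}
    {x : {m : (idem A (e i)).carrier // m ≠ (idem A (e i)).pt}}
    {y : {m : (idem A (e j)).carrier // m ≠ (idem A (e j)).pt}}
    (hij : i = j) (hxy : x.1.1 = y.1.1) :
    @Eq (wedge fun k => idem A (e k)).carrier (some ⟨i, x⟩) (some ⟨j, y⟩) := by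
  subst hij
  exact congrArg some (congrArg (Sigma.mk i) (Subtype.ext (Subtype.ext hxy)))

noncomputable def freeCover (P : ASet A) : ASetHom (free A {p : P.carrier // p ≠ P.pt}) P :=
  wedgeLift fun p => P.orbitHom p.1

theorem freeCover_surjective (P : ASet A) : Function.Surjective (freeCover P).toFun := by
  intro p
  by_cases hp : p = P.pt
  · exact ⟨none, hp.symm⟩
  · have h1 : (1 : A) ≠ 0 := fun h => hp (by rw [← P.one_act p, h, P.zero_act])
    exact ⟨some ⟨⟨p, hp⟩, ⟨(1 : A), h1⟩⟩, P.one_act p⟩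

def freeCoef {S : Type u} (x : (free A S).carrier) : A :=
  Option.elim x 0 fun y => y.2.1

def freeBase (P : ASet A) (x : (free A {p : P.carrier // p ≠ P.pt}).carrier) : P.carrier :=
  Option.elim x P.pt fun y => y.1.1

theorem freeCoef_act {S : Type u} (b : A) (x : (free A S).carrier) :
    freeCoef ((free A S).act b x) = b * freeCoef x := by
  rcases x with _ | y
  · exact (mul_zero b).symm
  · show freeCoef ((wedge fun _ : S => ofSelf A).act b (some y)) = _
    rw [wedge_act_some]
    split_ifs with h
    · exact h.symm
    · rfl

theorem freeBase_act (P : ASet A) (b : A) (x : (free A {p : P.carrier // p ≠ P.pt}).carrier)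
    (hx : (free A _).act b x ≠ (free A _).pt) :
    freeBase P ((free A _).act b x) = freeBase P x := by
  rcases x with _ | y
  · exact absurd rfl hx
  · change (wedge fun _ => ofSelf A).act b (some y) ≠ none at hx
    show freeBase P ((wedge fun _ => ofSelf A).act b (some y)) = _
    rw [wedge_act_some] at hx ⊢
    rw [dif_neg fun h => hx (dif_pos h)]
    rfl

theorem freeCover_apply (P : ASet A) (x : (free A {p : P.carrier // p ≠ P.pt}).carrier) :
    (freeCover P).toFun x = P.act (freeCoef x) (freeBase P x) := by
  rcases x with _ | y
  · exact (P.zero_act P.pt).symm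
  · rfl

/-- Orbit coordinates `p = coef p • base p`, as provided by a section of `freeCover P`. -/
structure Coordinates (P : ASet A) where
  base : P.carrier → P.carrier
  coef : P.carrier → A
  coef_act_base : ∀ p, P.act (coef p) (base p) = p
  coef_act : ∀ b p, coef (P.act b p) = b * coef p
  base_act : ∀ b p, P.act b p ≠ P.pt → base (P.act b p) = base p

def Coordinates.ofSection {P : ASet A} (σ : ASetHom P (free A {p : P.carrier // p ≠ P.pt}))
    (hσ : ∀ p, (freeCover P).toFun (σ.toFun p) = p) : P.Coordinates where
  base p := freeBase P (σ.toFun p)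
  coef p := freeCoef (σ.toFun p)
  coef_act_base p := by
    rw [← freeCover_apply, hσ]
  coef_act b p := by
    rw [σ.map_act, freeCoef_act]
  base_act b p hbp := by
    rw [σ.map_act]
    refine freeBase_act P b _ fun h => hbp ?_
    rw [← hσ (P.act b p), σ.map_act, h, (freeCover P).map_pt]

namespace Coordinates

variable {P : ASet A} (c : P.Coordinates)

theorem coef_pt : c.coef P.pt = 0 := by
  rw [← P.zero_act P.pt, c.coef_act, zero_mul]

theorem coef_ne_zero {p : P.carrier} (hp : p ≠ P.pt) : c.coef p ≠ 0 := fun h =>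
  hp (by rw [← c.coef_act_base p, h, P.zero_act])

theorem base_ne_pt {p : P.carrier} (hp : p ≠ P.pt) : c.base p ≠ P.pt := fun h =>
  hp (by rw [← c.coef_act_base p, h, P.act_pt])

theorem base_base {p : P.carrier} (hp : p ≠ P.pt) : c.base (c.base p) = c.base p := by
  have h := c.base_act (c.coef p) (c.base p)
  rw [c.coef_act_base] at h
  exact (h hp).symm

theorem coef_mul_coef_base (p : P.carrier) : c.coef p * c.coef (c.base p) = c.coef p := by
  conv_rhs => rw [← c.coef_act_base p, c.coef_act]

abbrev Generators : Type u := {g : P.carrier // g ≠ P.pt ∧ c.base g = g}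

theorem isIdempotentElem_coef (g : c.Generators) : IsIdempotentElem (c.coef g.1) := by
  have h := c.coef_mul_coef_base g.1
  rwa [g.2.2] at h

theorem coef_mem_idem (p : P.carrier) : ∃ a, c.coef p = c.coef (c.base p) * a :=
  ⟨c.coef p, by rw [mul_comm, c.coef_mul_coef_base]⟩

noncomputable def ofWedge : ASetHom (wedge fun g : c.Generators => idem A (c.coef g.1)) P :=
  wedgeLift fun g => (P.orbitHom g.1).comp (idemVal _)

open Classical in
noncomputable def toWedge (p : P.carrier) :
    (wedge fun g : c.Generators => idem A (c.coef g.1)).carrier :=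
  if hp : p = P.pt then none
  else some ⟨⟨c.base p, c.base_ne_pt hp, c.base_base hp⟩,
    ⟨⟨c.coef p, c.coef_mem_idem p⟩, fun h => c.coef_ne_zero hp (congrArg Subtype.val h)⟩⟩

theorem toWedge_pt : c.toWedge P.pt = none := dif_pos rfl

theorem toWedge_of_ne_pt {p : P.carrier} (hp : p ≠ P.pt) :
    c.toWedge p = some ⟨⟨c.base p, c.base_ne_pt hp, c.base_base hp⟩,
      ⟨⟨c.coef p, c.coef_mem_idem p⟩, fun h => c.coef_ne_zero hp (congrArg Subtype.val h)⟩⟩ :=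
  dif_neg hp

theorem ofWedge_toWedge : Function.LeftInverse c.ofWedge.toFun c.toWedge := by
  intro p
  by_cases hp : p = P.pt
  · rw [hp, toWedge_pt]
    rfl
  · rw [toWedge_of_ne_pt c hp]
    exact c.coef_act_base p

theorem toWedge_ofWedge : Function.RightInverse c.ofWedge.toFun c.toWedge := by
  rintro (_ | ⟨g, ⟨a, ha⟩, ha0⟩)
  · exact c.toWedge_pt
  · obtain ⟨b, rfl⟩ := ha
    have hcoef : c.coef (P.act (c.coef g.1 * b) g.1) = c.coef g.1 * b := by
      rw [c.coef_act, mul_right_comm, c.isIdempotentElem_coef g]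
    have hne : P.act (c.coef g.1 * b) g.1 ≠ P.pt := fun h => ha0 (Subtype.ext (by
      change c.coef g.1 * b = 0
      rw [← hcoef, h, c.coef_pt]))
    change c.toWedge (P.act (c.coef g.1 * b) g.1) = _
    rw [toWedge_of_ne_pt c hne]
    exact wedge_idem_some_eq (e := fun g : c.Generators => c.coef g.1)
      (Subtype.ext ((c.base_act _ _ hne).trans g.2.2)) hcoef

theorem iso_wedge : Iso P (wedge fun g : c.Generators => idem A (c.coef g.1)) :=
  Iso.of_inverse c.ofWedge c.toWedge c.ofWedge_toWedge c.toWedge_ofWedge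

end Coordinates

end ASet

/-- Every projective `A`-set is isomorphic to a wedge `⋁ᵢ eᵢA` of principal `A`-sets
generated by idempotents `eᵢ² = eᵢ`. -/
theorem projective_iso_wedge_of_idempotents {A : Type u} [CommMonoidWithZero A]
    (P : ASet A) (hP : P.IsProjective) :
    ∃ (ι : Type u) (e : ι → A), (∀ i, e i * e i = e i) ∧
      ASet.Iso P (ASet.wedge fun i => ASet.idem A (e i)) := by
  obtain ⟨σ, hσ⟩ := hP.exists_section (ASet.freeCover P) (ASet.freeCover_surjective P)
  let c := ASet.Coordinates.ofSection σ fun p => congrArg (fun k => ASetHom.toFun k p) hσ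
  exact ⟨c.Generators, fun g => c.coef g.1, c.isIdempotentElem_coef, c.iso_wedge⟩
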